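/- The family L₁ does not belong to 1U; that is, no polynomial-size unambiguous family of 1nfa's over {0,1,#} solves L₁. -/

import Mathlib

/-! ## One-way nondeterministic finite automata -/

structure OneNFA (α : Type) : Type 1 where
  Q : Type
  [finQ : Fintype Q]
  start : Q
  next : Q → α → Set Q
  next_nonempty : ∀ q a, (next q a).Nonempty
  acc : Set Q

attribute [instance] OneNFA.finQ

namespace OneNFA

variable {α : Type}

/-- The state complexity (number of inner states). -/
def sc (M : OneNFA α) : ℕ := Fintype.card M.Q

/-- `p` is a computation path of `M` on input `x`. -/
def IsPath (M : OneNFA α) (x : List α) (p : Fin (x.length + 1) → M.Q) : Prop :=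
  p 0 = M.start ∧ ∀ i : Fin x.length, p i.succ ∈ M.next (p i.castSucc) (x.get i)

/-- `p` is an accepting computation path of `M` on input `x`. -/
def IsAccPath (M : OneNFA α) (x : List α) (p : Fin (x.length + 1) → M.Q) : Prop :=
  M.IsPath x p ∧ p (Fin.last x.length) ∈ M.acc

def Accepts (M : OneNFA α) (x : List α) : Prop := ∃ p, M.IsAccPath x p

/-- `M` is a 1dfa: every transition set is a singleton. -/
def Deterministic (M : OneNFA α) : Prop := ∀ q a, ∃ q', M.next q a = {q'}

end OneNFA

/-! ## Families of promise problems -/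

structure PromiseFamily (α : Type) where
  pos : ℕ → Set (List α)
  neg : ℕ → Set (List α)
  disj : ∀ n, Disjoint (pos n) (neg n)

namespace PromiseFamily

def valid {α : Type} (L : PromiseFamily α) (n : ℕ) : Set (List α) := L.pos n ∪ L.neg n

def co {α : Type} (L : PromiseFamily α) : PromiseFamily α :=
  ⟨L.neg, L.pos, fun n => (L.disj n).symm⟩

end PromiseFamily

/-- A family of promise problems over some finite alphabet. -/
structure Family : Type 1 where
  alph : Type
  [finA : Fintype alph]
  prob : PromiseFamily alph

attribute [instance] Family.finA

def Family.co (F : Family) : Family := { alph := F.alph, prob := F.prob.co }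

/-! ## One-way machine families -/

def Solves1 {α : Type} (M : ℕ → OneNFA α) (L : PromiseFamily α) : Prop :=
  ∀ n, (∀ x ∈ L.pos n, (M n).Accepts x) ∧ (∀ x ∈ L.neg n, ¬ (M n).Accepts x)

def PolySize1 {α : Type} (M : ℕ → OneNFA α) : Prop :=
  ∃ p : Polynomial ℕ, ∀ n, (M n).sc ≤ p.eval n

def Unambiguous1 {α : Type} (M : ℕ → OneNFA α) (L : PromiseFamily α) : Prop :=
  ∀ n, ∀ x ∈ L.valid n, {p | (M n).IsAccPath x p}.Subsingleton

def AcceptFew1 {α : Type} (M : ℕ → OneNFA α) (L : PromiseFamily α) : Prop :=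
  ∃ P : MvPolynomial (Fin 2) ℕ, ∀ n, ∀ x ∈ L.valid n,
    {p | (M n).IsAccPath x p}.ncard ≤ MvPolynomial.eval ![n, x.length] P

def WeaklyUnambiguous1 {α : Type} (M : ℕ → OneNFA α) (L : PromiseFamily α) : Prop :=
  ∀ n, ∀ x ∈ L.valid n, ∀ q : (M n).Q,
    {p | (M n).IsAccPath x p ∧ p (Fin.last x.length) = q}.Subsingleton

def ReachUnambiguous1 {α : Type} (M : ℕ → OneNFA α) (L : PromiseFamily α) : Prop :=
  ∀ n, ∀ x ∈ L.valid n, ∀ i ≤ x.length, ∀ q : (M n).Q,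
    {p : Fin ((x.take i).length + 1) → (M n).Q |
      (M n).IsPath (x.take i) p ∧ p (Fin.last (x.take i).length) = q}.Subsingleton

def ReachFew1 {α : Type} (M : ℕ → OneNFA α) (L : PromiseFamily α) : Prop :=
  ∃ P : MvPolynomial (Fin 2) ℕ, ∀ n, ∀ x ∈ L.valid n, ∀ i ≤ x.length, ∀ q : (M n).Q,
    {p : Fin ((x.take i).length + 1) → (M n).Q |
      (M n).IsPath (x.take i) p ∧ p (Fin.last (x.take i).length) = q}.ncard ≤
      MvPolynomial.eval ![n, x.length] P

/-! ## One-way nonuniform state complexity classes -/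

def oneN : Set Family :=
  {F | ∃ M : ℕ → OneNFA F.alph, PolySize1 M ∧ Solves1 M F.prob}

def oneD : Set Family :=
  {F | ∃ M : ℕ → OneNFA F.alph, PolySize1 M ∧ (∀ n, (M n).Deterministic) ∧ Solves1 M F.prob}

def oneU : Set Family :=
  {F | ∃ M : ℕ → OneNFA F.alph, PolySize1 M ∧ Unambiguous1 M F.prob ∧ Solves1 M F.prob}

def oneFew : Set Family :=
  {F | ∃ M : ℕ → OneNFA F.alph, PolySize1 M ∧ AcceptFew1 M F.prob ∧ Solves1 M F.prob}

def oneFewU : Set Family :=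
  {F | ∃ M : ℕ → OneNFA F.alph, PolySize1 M ∧ AcceptFew1 M F.prob ∧
        WeaklyUnambiguous1 M F.prob ∧ Solves1 M F.prob}

def oneReachU : Set Family :=
  {F | ∃ M : ℕ → OneNFA F.alph, PolySize1 M ∧ AcceptFew1 M F.prob ∧
        ReachUnambiguous1 M F.prob ∧ Solves1 M F.prob}

def oneReachFew : Set Family :=
  {F | ∃ M : ℕ → OneNFA F.alph, PolySize1 M ∧ AcceptFew1 M F.prob ∧
        ReachFew1 M F.prob ∧ Solves1 M F.prob}

def oneReachFewU : Set Family :=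
  {F | ∃ M : ℕ → OneNFA F.alph, PolySize1 M ∧ AcceptFew1 M F.prob ∧
        ReachFew1 M F.prob ∧ WeaklyUnambiguous1 M F.prob ∧ Solves1 M F.prob}

/-- The complement class `co-C`. -/
def coC (C : Set Family) : Set Family := {F | F.co ∈ C}
/-! ## Two-way nondeterministic finite automata -/

/-- A tape symbol: either an input symbol, the left endmarker `Sum.inr false`,
or the right endmarker `Sum.inr true`. -/
def TapeSym (α : Type) : Type := α ⊕ Bool

/-- The symbol held in cell `i` of the tape containing `▷x◁`. -/
def tapeAt {α : Type} (x : List α) (i : ℕ) : TapeSym α :=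
  if h0 : i = 0 then Sum.inr false
  else if h : i ≤ x.length then Sum.inl (x.get ⟨i - 1, by omega⟩)
  else Sum.inr true

structure TwoNFA (α : Type) : Type 1 where
  Q : Type
  [finQ : Fintype Q]
  start : Q
  acc : Set Q
  rej : Set Q
  acc_rej_disj : Disjoint acc rej
  next : Q → TapeSym α → Set (Q × ℤ)
  next_dir : ∀ q a t, t ∈ next q a → t.2 = -1 ∨ t.2 = 0 ∨ t.2 = 1

attribute [instance] TwoNFA.finQ

namespace TwoNFA

variable {α : Type}

def sc (M : TwoNFA α) : ℕ := Fintype.card M.Q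

def Halting (M : TwoNFA α) (q : M.Q) : Prop := q ∈ M.acc ∨ q ∈ M.rej

/-- Configuration `c` yields configuration `c'` in one step on input `x`. -/
def Yields (M : TwoNFA α) (x : List α) (c c' : M.Q × ℕ) : Prop :=
  ¬ M.Halting c.1 ∧ c.2 ≤ x.length + 1 ∧ c'.2 ≤ x.length + 1 ∧
    ∃ d : ℤ, (c'.1, d) ∈ M.next c.1 (tapeAt x c.2) ∧ (c'.2 : ℤ) = (c.2 : ℤ) + d

/-- A partial computation path of length `k` of `M` on `x`. -/
def IsPartialPath (M : TwoNFA α) (x : List α) (k : ℕ) (p : Fin (k + 1) → M.Q × ℕ) : Prop :=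
  p 0 = (M.start, 0) ∧ ∀ i : Fin k, M.Yields x (p i.castSucc) (p i.succ)

/-- A (full) computation path: the final configuration is the only halting one. -/
def IsCompPath (M : TwoNFA α) (x : List α) (k : ℕ) (p : Fin (k + 1) → M.Q × ℕ) : Prop :=
  M.IsPartialPath x k p ∧ ∀ i : Fin (k + 1), (M.Halting (p i).1 ↔ i = Fin.last k)

def IsAccPath (M : TwoNFA α) (x : List α) (k : ℕ) (p : Fin (k + 1) → M.Q × ℕ) : Prop :=
  M.IsCompPath x k p ∧ (p (Fin.last k)).1 ∈ M.acc

def Accepts (M : TwoNFA α) (x : List α) : Prop := ∃ k p, M.IsAccPath x k p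

def Deterministic (M : TwoNFA α) : Prop := ∀ q a, ∃ t, M.next q a = {t}

/-- The set of accepting computation paths of `M` on `x`. -/
def accPaths (M : TwoNFA α) (x : List α) : Set ((k : ℕ) × (Fin (k + 1) → M.Q × ℕ)) :=
  {kp | M.IsAccPath x kp.1 kp.2}

/-- The set of computation paths of `M` on `x` ending at configuration `conf`. -/
def compPathsTo (M : TwoNFA α) (x : List α) (conf : M.Q × ℕ) :
    Set ((k : ℕ) × (Fin (k + 1) → M.Q × ℕ)) :=
  {kp | M.IsCompPath x kp.1 kp.2 ∧ kp.2 (Fin.last kp.1) = conf}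

/-- The set of partial computation paths of `M` on `x` ending at configuration `conf`. -/
def partialPathsTo (M : TwoNFA α) (x : List α) (conf : M.Q × ℕ) :
    Set ((k : ℕ) × (Fin (k + 1) → M.Q × ℕ)) :=
  {kp | M.IsPartialPath x kp.1 kp.2 ∧ kp.2 (Fin.last kp.1) = conf}

end TwoNFA

/-! ## Two-way machine families -/

def Solves2 {α : Type} (M : ℕ → TwoNFA α) (L : PromiseFamily α) : Prop :=
  ∀ n, (∀ x ∈ L.pos n, (M n).Accepts x) ∧ (∀ x ∈ L.neg n, ¬ (M n).Accepts x)

def PolySize2 {α : Type} (M : ℕ → TwoNFA α) : Prop :=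
  ∃ p : Polynomial ℕ, ∀ n, (M n).sc ≤ p.eval n

def Unambiguous2 {α : Type} (M : ℕ → TwoNFA α) (L : PromiseFamily α) : Prop :=
  ∀ n, ∀ x ∈ L.valid n, ((M n).accPaths x).Subsingleton

def AcceptFew2 {α : Type} (M : ℕ → TwoNFA α) (L : PromiseFamily α) : Prop :=
  ∃ P : MvPolynomial (Fin 2) ℕ, ∀ n, ∀ x ∈ L.valid n,
    ((M n).accPaths x).encard ≤ (MvPolynomial.eval ![n, x.length] P : ℕ∞)

def WeaklyUnambiguous2 {α : Type} (M : ℕ → TwoNFA α) (L : PromiseFamily α) : Prop :=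
  ∀ n, ∀ x ∈ L.valid n, ∀ conf : (M n).Q × ℕ, conf.1 ∈ (M n).acc →
    ((M n).compPathsTo x conf).Subsingleton

def ReachUnambiguous2 {α : Type} (M : ℕ → TwoNFA α) (L : PromiseFamily α) : Prop :=
  ∀ n, ∀ x ∈ L.valid n, ∀ conf : (M n).Q × ℕ,
    ((M n).partialPathsTo x conf).Subsingleton

def ReachFew2 {α : Type} (M : ℕ → TwoNFA α) (L : PromiseFamily α) : Prop :=
  ∃ P : MvPolynomial (Fin 2) ℕ, ∀ n, ∀ x ∈ L.valid n, ∀ conf : (M n).Q × ℕ,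
    ((M n).partialPathsTo x conf).encard ≤ (MvPolynomial.eval ![n, x.length] P : ℕ∞)

/-! ## Two-way nonuniform state complexity classes -/

def twoN : Set Family :=
  {F | ∃ M : ℕ → TwoNFA F.alph, PolySize2 M ∧ Solves2 M F.prob}

def twoD : Set Family :=
  {F | ∃ M : ℕ → TwoNFA F.alph, PolySize2 M ∧ (∀ n, (M n).Deterministic) ∧ Solves2 M F.prob}

def twoU : Set Family :=
  {F | ∃ M : ℕ → TwoNFA F.alph, PolySize2 M ∧ Unambiguous2 M F.prob ∧ Solves2 M F.prob}

def twoFew : Set Family :=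
  {F | ∃ M : ℕ → TwoNFA F.alph, PolySize2 M ∧ AcceptFew2 M F.prob ∧ Solves2 M F.prob}

def twoFewU : Set Family :=
  {F | ∃ M : ℕ → TwoNFA F.alph, PolySize2 M ∧ AcceptFew2 M F.prob ∧
        WeaklyUnambiguous2 M F.prob ∧ Solves2 M F.prob}

def twoReachU : Set Family :=
  {F | ∃ M : ℕ → TwoNFA F.alph, PolySize2 M ∧ AcceptFew2 M F.prob ∧
        ReachUnambiguous2 M F.prob ∧ Solves2 M F.prob}

def twoReachFew : Set Family :=
  {F | ∃ M : ℕ → TwoNFA F.alph, PolySize2 M ∧ AcceptFew2 M F.prob ∧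
        ReachFew2 M F.prob ∧ Solves2 M F.prob}

def twoReachFewU : Set Family :=
  {F | ∃ M : ℕ → TwoNFA F.alph, PolySize2 M ∧ AcceptFew2 M F.prob ∧
        ReachFew2 M F.prob ∧ WeaklyUnambiguous2 M F.prob ∧ Solves2 M F.prob}

/-! ## Ceilings -/

/-- The family `F` has an `f(n)`-ceiling. -/
def HasCeiling (F : Family) (f : ℕ → ℕ) : Prop :=
  ∀ n, ∀ x ∈ F.prob.valid n, x.length ≤ f n

/-- The restriction `C/F` of a class `C` to families having an `f`-ceiling for some `f ∈ S`. -/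
def ceil (C : Set Family) (S : Set (ℕ → ℕ)) : Set Family :=
  {F | F ∈ C ∧ ∃ f ∈ S, HasCeiling F f}

def polyFuns : Set (ℕ → ℕ) := {f | ∃ p : Polynomial ℕ, ∀ n, f n = p.eval n}

/-- Super-exponential functions: `f(n) > 2^{p(n)}` for all but finitely many `n`,
for every polynomial `p`. -/
def supexpFuns : Set (ℕ → ℕ) :=
  {f | ∀ p : Polynomial ℕ, ∃ N, ∀ n ≥ N, 2 ^ p.eval n < f n}

/-- `F` has a logarithmic ceiling `ℓ(n) = a·log₂ n + b` with constants `a, b ≥ 0`. -/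
def HasLogCeiling (F : Family) : Prop :=
  ∃ a b : ℝ, 0 ≤ a ∧ 0 ≤ b ∧
    ∀ n, ∀ x ∈ F.prob.valid n, (x.length : ℝ) ≤ a * Real.logb 2 n + b

/-- The restriction `C/log` of a class `C` to families having logarithmic ceilings. -/
def ceilLog (C : Set Family) : Set Family := {F | F ∈ C ∧ HasLogCeiling F}
/-! ## The alphabet `{0, 1, #}` and encodings -/

inductive Sym3 : Type
  | zero | one | hash
deriving DecidableEq

instance : Fintype Sym3 :=
  ⟨{Sym3.zero, Sym3.one, Sym3.hash}, by intro x; cases x <;> simp⟩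

/-- The block `1^i 0^{m-i}`. -/
def block (m i : ℕ) : List Sym3 :=
  List.replicate i Sym3.one ++ List.replicate (m - i) Sym3.zero

lemma block_length {m i : ℕ} (h : i ≤ m) : (block m i).length = m := by
  simp [block]; omega

lemma block_count {m : ℕ} (i : ℕ) : (block m i).count Sym3.one = i := by
  simp [block, List.count_append, List.count_replicate]

lemma block_inj {m i j : ℕ} (h : block m i = block m j) : i = j := by
  have := block_count (m := m) i
  rw [h, block_count] at this
  omega

/-- The encoding `[[i₁,…,i_k]]_m` of a list of numbers. -/
def enc (m : ℕ) : List ℕ → List Sym3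
  | [] => []
  | [i] => block m i
  | i :: j :: rest => block m i ++ Sym3.zero :: enc m (j :: rest)

/-- Lists of length `k` with entries in `[n]`. -/
def ValidList (n k : ℕ) (l : List ℕ) : Prop :=
  l.length = k ∧ ∀ i ∈ l, 1 ≤ i ∧ i ≤ n

lemma enc_length {m : ℕ} :
    ∀ l : List ℕ, (∀ i ∈ l, i ≤ m) → (enc m l).length = l.length * (m + 1) - 1
  | [] => by simp [enc]
  | [i] => by
      intro h
      simp [enc, block_length (h i (by simp))]
  | i :: j :: rest => by
      intro h
      have ih := enc_length (j :: rest) (fun a ha => h a (List.mem_cons_of_mem _ ha))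
      have hb : (block m i).length = m := block_length (h i (List.mem_cons_self))
      show (block m i ++ Sym3.zero :: enc m (j :: rest)).length = _
      rw [List.length_append, hb, List.length_cons, ih]
      have hc : (i :: j :: rest).length = (j :: rest).length + 1 := by simp
      rw [hc]
      set L := (j :: rest).length with hLdef
      have hL : 1 ≤ L := by simp [hLdef]
      have h1 : (L + 1) * (m + 1) = L * (m + 1) + (m + 1) := by ring
      rw [h1]
      set P := L * (m + 1) with hPdef
      have hP : 1 ≤ P := by
        have := Nat.mul_le_mul hL (Nat.le_add_left 1 m)
        simpa [hPdef] using this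
      omega

lemma enc_ne_nil {m : ℕ} (i : ℕ) (rest : List ℕ) (hi : 1 ≤ i) :
    enc m (i :: rest) ≠ [] := by
  cases rest with
  | nil =>
      simp only [enc, block]
      intro h
      have := congrArg List.length h
      simp at this
      omega
  | cons j rest' =>
      simp only [enc]
      intro h
      have := congrArg List.length h
      simp at this

lemma enc_inj {m : ℕ} :
    ∀ u w : List ℕ, (∀ i ∈ u, 1 ≤ i ∧ i ≤ m) → (∀ i ∈ w, 1 ≤ i ∧ i ≤ m) →
      enc m u = enc m w → u = w
  | [], [], _, _, _ => rfl
  | [], j :: w', _, hw, h => by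
      exact absurd h.symm (enc_ne_nil j w' (hw j (by simp)).1)
  | i :: u', [], hu, _, h => by
      exact absurd h (enc_ne_nil i u' (hu i (by simp)).1)
  | [i], [j], hu, hw, h => by
      simp only [enc] at h
      rw [block_inj h]
  | [i], j :: b :: w', hu, hw, h => by
      exfalso
      have hl := congrArg List.length h
      rw [show enc m [i] = block m i from rfl,
        show enc m (j :: b :: w') = block m j ++ Sym3.zero :: enc m (b :: w') from rfl] at hl
      rw [List.length_append, List.length_cons,
        block_length (hu i (by simp)).2, block_length (hw j (by simp)).2] at hl
      omega
  | i :: a :: u', [j], hu, hw, h => by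
      exfalso
      have hl := congrArg List.length h
      rw [show enc m [j] = block m j from rfl,
        show enc m (i :: a :: u') = block m i ++ Sym3.zero :: enc m (a :: u') from rfl] at hl
      rw [List.length_append, List.length_cons,
        block_length (hu i (by simp)).2, block_length (hw j (by simp)).2] at hl
      omega
  | i :: a :: u', j :: b :: w', hu, hw, h => by
      rw [show enc m (i :: a :: u') = block m i ++ Sym3.zero :: enc m (a :: u') from rfl,
        show enc m (j :: b :: w') = block m j ++ Sym3.zero :: enc m (b :: w') from rfl] at h
      have hlen : (block m i).length = (block m j).length := by
        rw [block_length (hu i (by simp)).2, block_length (hw j (by simp)).2]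
      obtain ⟨h1, h2⟩ := List.append_inj h hlen
      have h3 : enc m (a :: u') = enc m (b :: w') := by
        simpa using h2
      have ih := enc_inj (a :: u') (b :: w')
        (fun x hx => hu x (List.mem_cons_of_mem _ hx))
        (fun x hx => hw x (List.mem_cons_of_mem _ hx)) h3
      rw [block_inj h1, ih]
/-! ## The promise problem family `L₁` -/

def L1pos (n : ℕ) : Set (List Sym3) :=
  {x | ∃ u v : List ℕ, ValidList n n u ∧ ValidList n n v ∧ u ≠ v ∧
        x = enc n u ++ Sym3.hash :: enc n v}

def L1neg (n : ℕ) : Set (List Sym3) :=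
  {x | ∃ u v : List ℕ, ValidList n n u ∧ ValidList n n v ∧ u = v ∧
        x = enc n u ++ Sym3.hash :: enc n v}

lemma L1_disj (n : ℕ) : Disjoint (L1pos n) (L1neg n) := by
  rw [Set.disjoint_left]
  rintro x ⟨u, v, hu, hv, huv, rfl⟩ ⟨u', v', hu', hv', huv', heq⟩
  have hlen : (enc n u).length = (enc n u').length := by
    rw [enc_length u (fun i hi => (hu.2 i hi).2),
      enc_length u' (fun i hi => (hu'.2 i hi).2), hu.1, hu'.1]
  obtain ⟨h1, h2⟩ := List.append_inj heq hlen
  have h2' : enc n v = enc n v' := by simpa using h2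
  have e1 : u = u' := enc_inj u u' hu.2 hu'.2 h1
  have e2 : v = v' := enc_inj v v' hv.2 hv'.2 h2'
  exact huv (by rw [e1, e2, huv'])

def L1prob : PromiseFamily Sym3 := ⟨L1pos, L1neg, L1_disj⟩

def L1fam : Family := { alph := Sym3, prob := L1prob }

/-! ## Matrices, their encodings, and the promise problem family `L₂` -/

/-- `R` represents an `n × n` matrix with entries in `[n]`, given as its list of rows. -/
def ValidMat (n : ℕ) (R : List (List ℕ)) : Prop :=
  R.length = n ∧ ∀ r ∈ R, ValidList n n r

/-- The encoding `[[D]]_n` of a matrix: its encoded rows joined by `#`. -/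
def encMat (n : ℕ) : List (List ℕ) → List Sym3
  | [] => []
  | [r] => enc n r
  | r :: s :: rest => enc n r ++ Sym3.hash :: encMat n (s :: rest)

lemma encMat_len {n : ℕ} :
    ∀ R : List (List ℕ), (∀ r ∈ R, ValidList n n r) →
      (encMat n R).length = R.length * (n * (n + 1) - 1 + 1) - 1
  | [] => by simp [encMat]
  | [r] => by
      intro h
      have hr := h r (by simp)
      have he : (enc n r).length = n * (n + 1) - 1 := by
        rw [enc_length r (fun i hi => (hr.2 i hi).2), hr.1]
      show (enc n r).length = ([r] : List (List ℕ)).length * (n * (n + 1) - 1 + 1) - 1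
      rw [he, show ([r] : List (List ℕ)).length = 1 from rfl]
      omega
  | r :: s :: rest => by
      intro h
      have ih := encMat_len (s :: rest) (fun a ha => h a (List.mem_cons_of_mem _ ha))
      have hr := h r (by simp)
      have he : (enc n r).length = n * (n + 1) - 1 := by
        rw [enc_length r (fun i hi => (hr.2 i hi).2), hr.1]
      show (enc n r ++ Sym3.hash :: encMat n (s :: rest)).length = _
      rw [List.length_append, he, List.length_cons, ih]
      have hc : (r :: s :: rest).length = (s :: rest).length + 1 := by simp
      rw [hc]
      set e := n * (n + 1) - 1 with hedef
      set L := (s :: rest).length with hLdef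
      have hL : 1 ≤ L := by simp [hLdef]
      have h1 : (L + 1) * (e + 1) = L * (e + 1) + (e + 1) := by ring
      rw [h1]
      set P := L * (e + 1) with hPdef
      have hP : 1 ≤ P := by
        calc 1 = 1 * 1 := by ring
        _ ≤ L * (e + 1) := Nat.mul_le_mul hL (by omega)
      omega

lemma encMat_inj {n : ℕ} :
    ∀ R W : List (List ℕ), (∀ r ∈ R, ValidList n n r) → (∀ r ∈ W, ValidList n n r) →
      R.length = W.length → encMat n R = encMat n W → R = W
  | [], [], _, _, _, _ => rfl
  | [], _ :: _, _, _, hl, _ => by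
      simp only [List.length_cons, List.length_nil] at hl
      omega
  | _ :: _, [], _, _, hl, _ => by
      simp only [List.length_cons, List.length_nil] at hl
      omega
  | [r], [w], hR, hW, _, h => by
      have := enc_inj r w (hR r (by simp)).2 (hW w (by simp)).2 h
      rw [this]
  | [r], w :: w' :: W', _, _, hl, _ => by
      simp only [List.length_cons, List.length_nil] at hl
      omega
  | r :: r' :: R', [w], _, _, hl, _ => by
      simp only [List.length_cons, List.length_nil] at hl
      omega
  | r :: r' :: R', w :: w' :: W', hR, hW, hl, h => by
      rw [show encMat n (r :: r' :: R') = enc n r ++ Sym3.hash :: encMat n (r' :: R') from rfl,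
        show encMat n (w :: w' :: W') = enc n w ++ Sym3.hash :: encMat n (w' :: W') from rfl] at h
      have hrlen : (enc n r).length = (enc n w).length := by
        have h1 := hR r (by simp); have h2 := hW w (by simp)
        rw [enc_length r (fun i hi => (h1.2 i hi).2),
          enc_length w (fun i hi => (h2.2 i hi).2), h1.1, h2.1]
      obtain ⟨h1, h2⟩ := List.append_inj h hrlen
      have h3 : encMat n (r' :: R') = encMat n (w' :: W') := by simpa using h2
      have ihr := enc_inj r w (hR r (by simp)).2 (hW w (by simp)).2 h1
      have ih := encMat_inj (r' :: R') (w' :: W')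
        (fun a ha => hR a (List.mem_cons_of_mem _ ha))
        (fun a ha => hW a (List.mem_cons_of_mem _ ha))
        (by simpa using hl) h3
      rw [ihr, ih]

/-- `SelSum R s` holds iff `s` is obtained by choosing one entry from each row of `R`
(the value `sum_D(σ)` for some choice function `σ`). -/
inductive SelSum : List (List ℕ) → ℕ → Prop
  | nil : SelSum [] 0
  | cons {a : ℕ} {r : List ℕ} {rest : List (List ℕ)} {s : ℕ} :
      a ∈ r → SelSum rest s → SelSum (r :: rest) (a + s)

def L2pos (n : ℕ) : Set (List Sym3) :=
  {x | ∃ R R' : List (List ℕ), ValidMat n R ∧ ValidMat n R' ∧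
        (∃ s : ℕ, SelSum R s ∧ SelSum R' s) ∧
        x = encMat n R ++ Sym3.hash :: Sym3.hash :: encMat n R'}

def L2neg (n : ℕ) : Set (List Sym3) :=
  {x | ∃ R R' : List (List ℕ), ValidMat n R ∧ ValidMat n R' ∧
        (∀ s s' : ℕ, SelSum R s → SelSum R' s' → s ≠ s') ∧
        x = encMat n R ++ Sym3.hash :: Sym3.hash :: encMat n R'}

lemma L2_disj (n : ℕ) : Disjoint (L2pos n) (L2neg n) := by
  rw [Set.disjoint_left]
  rintro x ⟨R, R', hR, hR', ⟨s, hs, hs'⟩, rfl⟩ ⟨W, W', hW, hW', hne, heq⟩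
  have hlen : (encMat n R).length = (encMat n W).length := by
    rw [encMat_len R hR.2, encMat_len W hW.2, hR.1, hW.1]
  obtain ⟨h1, h2⟩ := List.append_inj heq hlen
  have h2' : encMat n R' = encMat n W' := by simpa using h2
  have e1 : R = W := encMat_inj R W hR.2 hW.2 (by rw [hR.1, hW.1]) h1
  have e2 : R' = W' := encMat_inj R' W' hR'.2 hW'.2 (by rw [hR'.1, hW'.1]) h2'
  exact hne s s (e1 ▸ hs) (e2 ▸ hs') rfl

def L2prob : PromiseFamily Sym3 := ⟨L2pos, L2neg, L2_disj⟩

def L2fam : Family := { alph := Sym3, prob := L2prob }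
/-! ## One-way probabilistic finite automata data -/

/-- Product of the matrices of the symbols of a word. -/
noncomputable def wordMatrix {α Q : Type} [Fintype Q] [DecidableEq Q]
    (Mσ : TapeSym α → Matrix Q Q ℝ) (w : List (TapeSym α)) : Matrix Q Q ℝ :=
  (w.map Mσ).prod

/-- The tape word `▷ x ◁`. -/
def tapeWord {α : Type} (x : List α) : List (TapeSym α) :=
  Sum.inr false :: (x.map Sum.inl ++ [Sum.inr true])

/-- `p_{acc}(x : q)`: the `q`-entry of the row vector `ν · M_{▷x◁}`. -/
noncomputable def pacc {α Q : Type} [Fintype Q] [DecidableEq Q]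
    (ν : Q → ℝ) (Mσ : TapeSym α → Matrix Q Q ℝ) (x : List α) (q : Q) : ℝ :=
  Matrix.vecMul ν (wordMatrix Mσ (tapeWord x)) q

/-!
If an unambiguous `M` solves `L₁`, then on `[[w]] # [[w']]` for index words `w, w' ∈ [n]^n`
it has exactly one accepting path when `w ≠ w'` and none when `w = w'`. Splitting accepting
paths at the `#` factors this `n^n × n^n` matrix `J - I` through the states of `M`: its
`(w, w')` entry counts the states reachable on `[[w]]#` from which `[[w']]` is accepted, and
unambiguity makes that count at most one. Hence `n^n = rank (J - I) ≤ sc M`, which no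
polynomial bound on `sc M` allows for large `n`.
-/

open Polynomial in
theorem Polynomial.eval_le_eval_one_mul_pow (P : ℕ[X]) {n : ℕ} (hn : 1 ≤ n) :
    P.eval n ≤ P.eval 1 * n ^ P.natDegree := by
  rw [eval_eq_sum_range, eval_eq_sum_range, Finset.sum_mul]
  refine Finset.sum_le_sum fun i hi => ?_
  rw [one_pow, mul_one]
  exact Nat.mul_le_mul_left _
    (Nat.pow_le_pow_right hn (Nat.lt_succ_iff.mp (Finset.mem_range.mp hi)))

open Polynomial in
theorem Polynomial.exists_eval_lt_pow_self (P : ℕ[X]) : ∃ n, 2 ≤ n ∧ P.eval n < n ^ n := by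
  set n := max (P.eval 1 + 1) (P.natDegree + 2)
  refine ⟨n, by omega, ?_⟩
  calc P.eval n ≤ P.eval 1 * n ^ P.natDegree := P.eval_le_eval_one_mul_pow (by omega)
    _ < n * n ^ P.natDegree := Nat.mul_lt_mul_of_pos_right (by omega) (by positivity)
    _ = n ^ (P.natDegree + 1) := by ring
    _ ≤ n ^ n := Nat.pow_le_pow_right (by omega) (by omega)

theorem Matrix.rank_of_ite_ne_eq_card {ι K : Type*} [Fintype ι] [DecidableEq ι] [Field K]
    (h : (Fintype.card ι : K) ≠ 1) :
    (Matrix.of fun i j : ι => if i ≠ j then (1 : K) else 0).rank = Fintype.card ι := by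
  set A : Matrix ι ι K :=
    1 + replicateCol Unit (fun _ : ι => (-1 : K)) * replicateRow Unit (fun _ : ι => (1 : K))
  have hA : (Matrix.of fun i j : ι => if i ≠ j then (1 : K) else 0) = -A := by
    ext i j
    by_cases hij : i = j <;> simp [A, hij, Matrix.mul_apply]
  have hdet : A.det = 1 - Fintype.card ι := by
    rw [det_one_add_replicateCol_mul_replicateRow]
    simp [dotProduct, sub_eq_add_neg]
  rw [hA]
  refine rank_of_isUnit _ ((isUnit_iff_isUnit_det A).mpr ?_).neg
  rw [hdet]
  exact (sub_ne_zero.mpr h.symm).isUnit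

namespace OneNFA

variable {α : Type} (M : OneNFA α)

/-- Runs are indexed by `ℕ` rather than `Fin (x.length + 1)`, so that runs on `u` and `v` glue
to a run on `u ++ v` without casts; only the terms up to index `x.length` matter. -/
def IsRunFrom (q : M.Q) (x : List α) (s : ℕ → M.Q) : Prop :=
  s 0 = q ∧ ∀ i (h : i < x.length), s (i + 1) ∈ M.next (s i) x[i]

def Reaches (q : M.Q) (x : List α) (r : M.Q) : Prop :=
  ∃ s, M.IsRunFrom q x s ∧ s x.length = r

def AcceptsFrom (q : M.Q) (x : List α) : Prop :=
  ∃ s, M.IsRunFrom q x s ∧ s x.length ∈ M.acc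

variable {M}

theorem isPath_iff_isRunFrom {x : List α} {s : ℕ → M.Q} :
    M.IsPath x (fun i => s i) ↔ M.IsRunFrom M.start x s :=
  ⟨fun ⟨h0, hs⟩ => ⟨h0, fun i hi => hs ⟨i, hi⟩⟩, fun ⟨h0, hs⟩ => ⟨h0, fun i => hs i i.isLt⟩⟩

theorem accepts_iff_acceptsFrom_start {x : List α} :
    M.Accepts x ↔ M.AcceptsFrom M.start x := by
  constructor
  · rintro ⟨p, hp, hacc⟩
    set s : ℕ → M.Q := fun i => if h : i < x.length + 1 then p ⟨i, h⟩ else M.start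
    have hsp : (fun i : Fin (x.length + 1) => s i) = p := funext fun i => dif_pos i.isLt
    refine ⟨s, isPath_iff_isRunFrom.mp (hsp ▸ hp), ?_⟩
    have hlast : s x.length = p (Fin.last x.length) := dif_pos (Nat.lt_succ_self _)
    rwa [hlast]
  · rintro ⟨s, hs, hacc⟩
    exact ⟨fun i => s i, isPath_iff_isRunFrom.mpr hs, hacc⟩

theorem IsRunFrom.exists_append {q : M.Q} {u v : List α} {s t : ℕ → M.Q}
    (hs : M.IsRunFrom q u s) (ht : M.IsRunFrom (s u.length) v t) :
    ∃ g, M.IsRunFrom q (u ++ v) g ∧ g u.length = s u.length ∧ g (u ++ v).length = t v.length := by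
  refine ⟨fun i => if i ≤ u.length then s i else t (i - u.length), ⟨by simpa using hs.1, ?_⟩,
    by simp, ?_⟩
  · intro i hi
    rw [List.getElem_append]
    rcases lt_trichotomy i u.length with hlt | rfl | hgt
    · simpa [hlt.le, Nat.succ_le_of_lt hlt, hlt] using hs.2 i hlt
    · simpa [← ht.1] using ht.2 0 (by simp at hi; omega)
    · have := ht.2 (i - u.length) (by simp at hi; omega)
      simp only [show ¬ i + 1 ≤ u.length by omega, show ¬ i ≤ u.length by omega,
        show ¬ i < u.length by omega, if_false]
      rwa [show i + 1 - u.length = i - u.length + 1 by omega]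
  · rcases v with _ | ⟨a, v⟩
    · simpa using ht.1.symm
    · simp

theorem IsRunFrom.of_append {q : M.Q} {u v : List α} {s : ℕ → M.Q}
    (hs : M.IsRunFrom q (u ++ v) s) :
    M.IsRunFrom q u s ∧ M.IsRunFrom (s u.length) v (fun i => s (u.length + i)) := by
  refine ⟨⟨hs.1, fun i hi => ?_⟩, ⟨rfl, fun i hi => ?_⟩⟩
  · have := hs.2 i (by simp; omega)
    rwa [List.getElem_append_left hi] at this
  · have := hs.2 (u.length + i) (by simp; omega)
    simpa [List.getElem_append_right, Nat.add_assoc] using this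

theorem accepts_append_iff {u v : List α} :
    M.Accepts (u ++ v) ↔ ∃ r, M.Reaches M.start u r ∧ M.AcceptsFrom r v := by
  rw [accepts_iff_acceptsFrom_start]
  constructor
  · rintro ⟨s, hs, hacc⟩
    exact ⟨s u.length, ⟨s, hs.of_append.1, rfl⟩, _, hs.of_append.2, by simpa using hacc⟩
  · rintro ⟨r, ⟨s, hs, rfl⟩, t, ht, hacc⟩
    obtain ⟨g, hg, -, hglast⟩ := hs.exists_append ht
    exact ⟨g, hg, hglast ▸ hacc⟩

theorem subsingleton_reaches_acceptsFrom {u v : List α}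
    (h : {p | M.IsAccPath (u ++ v) p}.Subsingleton) :
    {r | M.Reaches M.start u r ∧ M.AcceptsFrom r v}.Subsingleton := by
  have glue : ∀ r ∈ {r | M.Reaches M.start u r ∧ M.AcceptsFrom r v},
      ∃ p, M.IsAccPath (u ++ v) p ∧ p ⟨u.length, by simp⟩ = r := by
    rintro r ⟨⟨s, hs, rfl⟩, t, ht, hacc⟩
    obtain ⟨g, hg, hgu, hglast⟩ := hs.exists_append ht
    exact ⟨fun i => g i, ⟨isPath_iff_isRunFrom.mpr hg, show g _ ∈ M.acc from hglast ▸ hacc⟩, hgu⟩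
  intro r₁ h₁ r₂ h₂
  obtain ⟨p₁, hp₁, rfl⟩ := glue r₁ h₁
  obtain ⟨p₂, hp₂, rfl⟩ := glue r₂ h₂
  rw [h hp₁ hp₂]

open Classical in
theorem rank_acceptanceMatrix_le_sc {K ι κ : Type*} [Field K] [Fintype ι] [Fintype κ]
    (u : ι → List α) (v : κ → List α)
    (h : ∀ i j, {p | M.IsAccPath (u i ++ v j) p}.Subsingleton) :
    (Matrix.of fun i j => if M.Accepts (u i ++ v j) then (1 : K) else 0).rank ≤ M.sc := by
  set R : Matrix ι M.Q K := Matrix.of fun i r => if M.Reaches M.start (u i) r then 1 else 0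
  set C : Matrix M.Q κ K := Matrix.of fun r j => if M.AcceptsFrom r (v j) then 1 else 0
  have hRC : (Matrix.of fun i j => if M.Accepts (u i ++ v j) then (1 : K) else 0) = R * C := by
    ext i j
    simp only [Matrix.of_apply, Matrix.mul_apply, R, C, ite_zero_mul_ite_zero, mul_one,
      Finset.sum_boole, accepts_append_iff]
    have hsub := subsingleton_reaches_acceptsFrom (h i j)
    split_ifs with hex
    · obtain ⟨r, hr⟩ := hex
      rw [Finset.card_eq_one.mpr ⟨r, Finset.eq_singleton_iff_unique_mem.mpr
        ⟨by simpa using hr, fun r' hr' => hsub (by simpa using hr') hr⟩⟩, Nat.cast_one]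
    · rw [Finset.card_eq_zero.mpr (Finset.filter_eq_empty_iff.mpr fun r _ hr => hex ⟨r, hr⟩),
        Nat.cast_zero]
  rw [hRC]
  exact (Matrix.rank_mul_le_left R C).trans (Matrix.rank_le_card_width R)

end OneNFA

def indexList (n : ℕ) (w : Fin n → Fin n) : List ℕ := List.ofFn fun i => (w i : ℕ) + 1

theorem validList_indexList (n : ℕ) (w : Fin n → Fin n) : ValidList n n (indexList n w) := by
  refine ⟨List.length_ofFn, fun i hi => ?_⟩
  obtain ⟨j, rfl⟩ := List.mem_ofFn.mp hi
  exact ⟨Nat.le_add_left _ _, (w j).isLt⟩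

theorem indexList_injective (n : ℕ) : Function.Injective (indexList n) := fun _ _ h =>
  funext fun j => Fin.ext (Nat.succ_injective (congrFun (List.ofFn_injective h) j))

def L1word (n : ℕ) (w w' : Fin n → Fin n) : List Sym3 :=
  enc n (indexList n w) ++ Sym3.hash :: enc n (indexList n w')

theorem L1word_mem_pos {n : ℕ} {w w' : Fin n → Fin n} (h : w ≠ w') : L1word n w w' ∈ L1pos n :=
  ⟨_, _, validList_indexList n w, validList_indexList n w', (indexList_injective n).ne h, rfl⟩

theorem L1word_mem_neg (n : ℕ) (w : Fin n → Fin n) : L1word n w w ∈ L1neg n :=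
  ⟨_, _, validList_indexList n w, validList_indexList n w, rfl, rfl⟩

theorem L1word_mem_valid (n : ℕ) (w w' : Fin n → Fin n) : L1word n w w' ∈ L1prob.valid n := by
  by_cases h : w = w'
  · exact Or.inr (h ▸ L1word_mem_neg n w)
  · exact Or.inl (L1word_mem_pos h)

theorem Solves1.accepts_L1word_iff {M : ℕ → OneNFA Sym3} (hM : Solves1 M L1prob) {n : ℕ}
    {w w' : Fin n → Fin n} : (M n).Accepts (L1word n w w') ↔ w ≠ w' := by
  refine ⟨fun hacc h => ?_, fun h => (hM n).1 _ (L1word_mem_pos h)⟩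
  subst h
  exact (hM n).2 _ (L1word_mem_neg n w) hacc

/-- The family `L₁` does not belong to `1U`. -/
theorem L1_not_mem_oneU : L1fam ∉ oneU := by
  intro hmem
  obtain ⟨M, ⟨P, hP⟩, hUn, hSol⟩ : ∃ M : ℕ → OneNFA Sym3,
    PolySize1 M ∧ Unambiguous1 M L1prob ∧ Solves1 M L1prob := hmem
  obtain ⟨n, hn, hlt⟩ := P.exists_eval_lt_pow_self
  have hsplit : ∀ w w',
      L1word n w w' = (enc n (indexList n w) ++ [Sym3.hash]) ++ enc n (indexList n w') := by
    simp [L1word]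
  have hrank := (M n).rank_acceptanceMatrix_le_sc (K := ℚ)
    (fun w => enc n (indexList n w) ++ [Sym3.hash]) (fun w' => enc n (indexList n w'))
    (fun w w' => hsplit w w' ▸ hUn n _ (L1word_mem_valid n w w'))
  simp only [← hsplit, hSol.accepts_L1word_iff] at hrank
  rw [Matrix.rank_of_ite_ne_eq_card, Fintype.card_fun, Fintype.card_fin] at hrank
  · exact absurd (hrank.trans (hP n)) hlt.not_ge
  · rw [Fintype.card_fun, Fintype.card_fin]
    exact_mod_cast (Nat.one_lt_pow (by omega) (by omega) : 1 < n ^ n).ne'
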